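/- Let w ∈ A₂ on ℝ^N. Then there is a constant C depending only on N such that for every axis-parallel cube Q ⊂ ℝ^N, ∫_Q M(w·1_Q)(x) dx ≤ C·[w]_{A₂}·w(Q), where M denotes the Hardy–Littlewood maximal operator Mf(x) := sup{ ⨍_R |f| dy : R an axis-parallel cube with x ∈ R } and w(Q) := ∫_Q w dx. -/

import Mathlib

open MeasureTheory
open scoped ENNReal

noncomputable section

/-- Points of `ℝ^N`, as `Fin N → ℝ`. -/
abbrev Euc (N : ℕ) := Fin N → ℝ

/-- The axis-parallel half-open cube with lower-left corner `c` and sidelength `l`. -/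
def cube {N : ℕ} (c : Euc N) (l : ℝ) : Set (Euc N) :=
  {x | ∀ i, c i ≤ x i ∧ x i < c i + l}

/-- The set of all local `A₂` products `(⨍_Q w)(⨍_Q w⁻¹)` over axis-parallel cubes `Q`. -/
def A2set {N : ℕ} (w : Euc N → ℝ) : Set ℝ :=
  {t | ∃ (c : Euc N) (l : ℝ), 0 < l ∧
    t = (⨍ x in cube c l, w x) * (⨍ x in cube c l, (w x)⁻¹)}

/-- The `A₂` characteristic `[w]_{A₂} = sup_Q (⨍_Q w)(⨍_Q w⁻¹)`. -/
def A2const {N : ℕ} (w : Euc N → ℝ) : ℝ := sSup (A2set w)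

/-- `w` is an `A₂` weight: positive, with `w` and `w⁻¹` locally integrable, and with
finite `A₂` characteristic (the set of local `A₂` products is bounded above). -/
structure IsA2Weight {N : ℕ} (w : Euc N → ℝ) : Prop where
  meas : Measurable w
  pos : ∀ x, 0 < w x
  locInt : LocallyIntegrable w volume
  locIntInv : LocallyIntegrable (fun x => (w x)⁻¹) volume
  bddA2 : BddAbove (A2set w)

/-- The Hardy–Littlewood maximal function over axis-parallel cubes (with values
in `[0,∞]`). -/
def maximalFn {N : ℕ} (f : Euc N → ℝ) (x : Euc N) : ℝ≥0∞ :=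
  ⨆ (c : Euc N) (l : ℝ) (_ : 0 < l) (_ : x ∈ cube c l),
    ENNReal.ofReal (⨍ y in cube c l, |f y|)

open Set

/-
For `x ∈ Q` and a cube `R ∋ x`, either `R` is comparable to `Q`, and then the average of `1_Q w`
over `R` is at most `3^N w(Q)/|Q|`; or, by the one-third trick, `Q ∩ R` lies in a cube `P` of one
of `2^N` shifted dyadic grids of `Q` with `|P| ≤ 6^N |R| ≤ 6^N |P ∩ Q|`. In the second case the
`A₂` condition on `P` gives `w(Q ∩ R)/|R| ≤ 36^N [w]_{A₂} |P ∩ Q|/σ(P)` with `σ = w⁻¹ dx`, and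
`|P ∩ Q|/σ(P)` is the `σ`-average over `P` of `g = 1_Q w`, because `g dσ = 1_Q dx`. Hence
`M(1_Q w) ≤ 3^N w(Q)/|Q| + 36^N [w]_{A₂} ∑ M^σ g` on `Q`, with the dyadic maximal operators
`M^σ` of the grids taken with respect to `σ`. Stopping at maximal cells, `M^σ` has weak type
`(1,1)` on `L¹(σ)`, hence is bounded on `L²(σ)` with a universal constant, and by Cauchy–Schwarz
`∫_Q M^σ g dx = ∫ M^σ g · g dσ ≤ ‖M^σ g‖_{L²(σ)} ‖g‖_{L²(σ)} ≲ ∫ g² dσ = w(Q)`.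
-/

theorem tsum_ite_le_two_zpow (m : ℤ) :
    ∑' n : ℤ, (if n ≤ m then (2 : ℝ≥0∞) ^ n else 0) = 2 * 2 ^ m := by
  have hinj : Function.Injective fun k : ℕ => m - k := fun a b hab => by simpa using hab
  have hsupp : Function.support (fun n : ℤ => if n ≤ m then (2 : ℝ≥0∞) ^ n else 0) ⊆
      range fun k : ℕ => m - k := by
    intro n hn
    have hnm : n ≤ m := by
      by_contra h
      simp [h] at hn
    exact ⟨(m - n).toNat, by simp only; omega⟩
  rw [← hinj.tsum_eq hsupp]
  calc ∑' k : ℕ, (if m - (k : ℤ) ≤ m then (2 : ℝ≥0∞) ^ (m - (k : ℤ)) else 0)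
      = ∑' k : ℕ, 2 ^ m * 2⁻¹ ^ k := by
        refine tsum_congr fun k => ?_
        rw [if_pos (by omega), sub_eq_add_neg, ENNReal.zpow_add two_ne_zero ENNReal.ofNat_ne_top,
          ENNReal.zpow_neg, zpow_natCast, ENNReal.inv_pow]
    _ = 2 * 2 ^ m := by
        rw [ENNReal.tsum_mul_left, ENNReal.tsum_geometric, ENNReal.one_sub_inv_two, inv_inv,
          mul_comm]

theorem tsum_ite_two_zpow_lt_le (a : ℝ≥0∞) :
    ∑' n : ℤ, (if (2 : ℝ≥0∞) ^ n < a then (2 : ℝ≥0∞) ^ n else 0) ≤ 2 * a := by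
  rcases eq_or_ne a 0 with rfl | ha0
  · simp
  rcases eq_or_ne a ∞ with rfl | hat
  · simp
  obtain ⟨m, hm, hma⟩ := ENNReal.exists_mem_Ico_zpow ha0 hat ENNReal.one_lt_two ENNReal.ofNat_ne_top
  calc _ ≤ ∑' n : ℤ, (if n ≤ m then (2 : ℝ≥0∞) ^ n else 0) := by
        refine ENNReal.tsum_le_tsum fun n => ?_
        split_ifs with hna hnm hnm
        · exact le_rfl
        · exact absurd ((ENNReal.zpow_le_of_le one_le_two (by omega)).trans_lt hna) hma.not_gt
        · exact zero_le
        · exact le_rfl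
    _ = 2 * 2 ^ m := tsum_ite_le_two_zpow m
    _ ≤ 2 * a := by gcongr

theorem sq_le_tsum_ite_two_mul_zpow_lt (a : ℝ≥0∞) :
    a ^ 2 ≤ ∑' n : ℤ, (if 2 * (2 : ℝ≥0∞) ^ n < a then 16 * ((2 : ℝ≥0∞) ^ n) ^ 2 else 0) := by
  rcases eq_or_ne a 0 with rfl | ha0
  · simp
  rcases eq_or_ne a ∞ with rfl | hat
  · calc ∞ ^ 2 ≤ ∑' _ : ℕ, (1 : ℝ≥0∞) := by
          rw [ENNReal.tsum_const_eq_top_of_ne_zero one_ne_zero]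
          exact le_top
      _ ≤ ∑' k : ℕ,
          (if 2 * (2 : ℝ≥0∞) ^ (k : ℤ) < ∞ then 16 * ((2 : ℝ≥0∞) ^ (k : ℤ)) ^ 2 else 0) := by
        refine ENNReal.tsum_le_tsum fun k => ?_
        rw [if_pos (by simp [ENNReal.mul_lt_top]), zpow_natCast, ← pow_mul]
        exact le_mul_of_one_le_of_le (by norm_num) (one_le_pow₀ one_le_two)
      _ ≤ _ := ENNReal.tsum_comp_le_tsum_of_injective Nat.cast_injective _
  obtain ⟨m, hm, hma⟩ := ENNReal.exists_mem_Ioc_zpow ha0 hat ENNReal.one_lt_two ENNReal.ofNat_ne_top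
  have hshift : ∀ n : ℤ, (2 : ℝ≥0∞) ^ (n + 1) = 2 * 2 ^ n := fun n => by
    rw [ENNReal.zpow_add two_ne_zero ENNReal.ofNat_ne_top, zpow_one, mul_comm]
  refine le_trans ?_ (ENNReal.le_tsum (m - 1))
  rw [← hshift, sub_add_cancel, if_pos hm]
  calc a ^ 2 ≤ ((2 : ℝ≥0∞) ^ (m + 1)) ^ 2 := by gcongr
    _ = 16 * ((2 : ℝ≥0∞) ^ (m - 1)) ^ 2 := by
        rw [show m + 1 = m - 1 + 1 + 1 by ring, hshift, hshift]
        ring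

theorem lintegral_sq_le_tsum_measure_lt {α : Type*} [MeasurableSpace α] {μ : Measure α}
    {F : α → ℝ≥0∞} (hF : Measurable F) :
    ∫⁻ x, F x ^ 2 ∂μ ≤ ∑' n : ℤ, 16 * ((2 : ℝ≥0∞) ^ n) ^ 2 * μ {x | 2 * 2 ^ n < F x} := by
  have hlevel : ∀ n : ℤ, MeasurableSet {x | 2 * (2 : ℝ≥0∞) ^ n < F x} := fun _ =>
    measurableSet_lt measurable_const hF
  calc ∫⁻ x, F x ^ 2 ∂μ
      ≤ ∫⁻ x, ∑' n : ℤ,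
          {x | 2 * 2 ^ n < F x}.indicator (fun _ => 16 * ((2 : ℝ≥0∞) ^ n) ^ 2) x ∂μ :=
        lintegral_mono fun x => by
          simpa only [indicator_apply, mem_ofPred_eq] using sq_le_tsum_ite_two_mul_zpow_lt (F x)
    _ = _ := by
        rw [lintegral_tsum fun n => (measurable_const.indicator (hlevel n)).aemeasurable]
        exact tsum_congr fun n => lintegral_indicator_const (hlevel n) _

theorem lintegral_mul_sq_le {α : Type*} [MeasurableSpace α] {μ : Measure α} {f g : α → ℝ≥0∞}
    (hf : AEMeasurable f μ) (hg : AEMeasurable g μ) :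
    (∫⁻ x, f x * g x ∂μ) ^ 2 ≤ (∫⁻ x, f x ^ 2 ∂μ) * ∫⁻ x, g x ^ 2 ∂μ := by
  have hH := ENNReal.lintegral_mul_le_Lp_mul_Lq μ Real.HolderConjugate.two_two hf hg
  simp only [ENNReal.rpow_two, Pi.mul_apply] at hH
  calc _ ≤ ((∫⁻ x, f x ^ 2 ∂μ) ^ (1 / 2 : ℝ) * (∫⁻ x, g x ^ 2 ∂μ) ^ (1 / 2 : ℝ)) ^ 2 := by
        gcongr
    _ = _ := by
        rw [mul_pow, one_div, show (2 : ℝ) = (2 : ℕ) by norm_num,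
          ENNReal.rpow_inv_natCast_pow two_ne_zero, ENNReal.rpow_inv_natCast_pow two_ne_zero]

theorem ENNReal.le_inv_mul_of_lt_div {a b t : ℝ≥0∞} (h : t < a / b) : b ≤ t⁻¹ * a := by
  rcases eq_or_ne t 0 with rfl | ht0
  · have ha : a ≠ 0 := by
      rintro rfl
      simp at h
    simp [ENNReal.top_mul ha]
  have htop : t ≠ ∞ := h.ne_top
  rw [← ENNReal.mul_le_iff_le_inv ht0 htop]
  exact (ENNReal.lt_div_iff_mul_lt (Or.inr htop) (Or.inr ht0) |>.1 h).le

theorem ENNReal.div_le_div_of_mul_le_mul {a b c d : ℝ≥0∞} (h : a * b ≤ c * d) (hd0 : d ≠ 0)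
    (hdt : d ≠ ∞) (hb0 : b ≠ 0) (hbt : b ≠ ∞) : a / d ≤ c / b := by
  rw [ENNReal.le_div_iff_mul_le (Or.inl hb0) (Or.inl hbt), div_eq_mul_inv, mul_right_comm,
    ← div_eq_mul_inv, ENNReal.div_le_iff_le_mul (Or.inl hd0) (Or.inl hdt)]
  exact h

section NestedMaximal

variable {α ι : Type*} {D : ℕ → ι → Set α}

structure IsNested (D : ℕ → ι → Set α) : Prop where
  disjoint : ∀ k ⦃j j' : ι⦄, j ≠ j' → Disjoint (D k j) (D k j')
  subset_of_le : ∀ ⦃k k' : ℕ⦄ (j j' : ι), k' ≤ k → (D k j ∩ D k' j').Nonempty → D k j ⊆ D k' j'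

theorem IsNested.exists_pairwiseDisjoint_cover (hD : IsNested D) (S : Set (ℕ × ι)) :
    ∃ T ⊆ S, T.PairwiseDisjoint (fun p => D p.1 p.2) ∧
      ⋃ p ∈ S, D p.1 p.2 ⊆ ⋃ p ∈ T, D p.1 p.2 := by
  classical
  -- The maximal cells: those meeting no cell of `S` of an earlier generation.
  refine ⟨{p | p ∈ S ∧ ∀ q ∈ S, q.1 < p.1 → Disjoint (D p.1 p.2) (D q.1 q.2)},
    fun p hp => hp.1, ?_, ?_⟩
  · rintro ⟨k, j⟩ hp ⟨k', j'⟩ hq hpq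
    rcases lt_trichotomy k k' with hlt | rfl | hgt
    · exact (hq.2 _ hp.1 hlt).symm
    · exact hD.disjoint k fun hj => hpq (Prod.ext rfl hj)
    · exact hp.2 _ hq.1 hgt
  · intro x hx
    simp only [mem_iUnion, exists_prop] at hx
    obtain ⟨p, hpS, hxp⟩ := hx
    have hex : ∃ k j, (k, j) ∈ S ∧ x ∈ D k j := ⟨p.1, p.2, hpS, hxp⟩
    obtain ⟨j, hjS, hxj⟩ := Nat.find_spec hex
    refine mem_biUnion (x := (Nat.find hex, j)) ⟨hjS, fun q hqS hlt => ?_⟩ hxj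
    by_contra hmeet
    exact Nat.find_min hex hlt
      ⟨q.2, hqS, hD.subset_of_le _ _ hlt.le (not_disjoint_iff_nonempty_inter.1 hmeet) hxj⟩

variable [MeasurableSpace α]

def dyadicMaximal (μ : Measure α) (D : ℕ → ι → Set α) (h : α → ℝ≥0∞) (x : α) : ℝ≥0∞ :=
  ⨆ (k : ℕ) (j : ι), (D k j).indicator (fun _ => ⨍⁻ y in D k j, h y ∂μ) x

variable {μ : Measure α} {h h₁ h₂ : α → ℝ≥0∞} {x : α}

theorem laverage_le_dyadicMaximal {k : ℕ} {j : ι} (hx : x ∈ D k j) :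
    ⨍⁻ y in D k j, h y ∂μ ≤ dyadicMaximal μ D h x := by
  refine le_trans ?_ (le_iSup₂ k j)
  rw [indicator_of_mem hx]

theorem dyadicMaximal_le {c : ℝ≥0∞} (hc : ∀ k j, x ∈ D k j → ⨍⁻ y in D k j, h y ∂μ ≤ c) :
    dyadicMaximal μ D h x ≤ c := by
  refine iSup₂_le fun k j => ?_
  by_cases hx : x ∈ D k j
  · rw [indicator_of_mem hx]
    exact hc k j hx
  · rw [indicator_of_notMem hx]
    exact zero_le

theorem lt_dyadicMaximal_iff {t : ℝ≥0∞} :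
    t < dyadicMaximal μ D h x ↔ ∃ k j, x ∈ D k j ∧ t < ⨍⁻ y in D k j, h y ∂μ := by
  refine ⟨fun ht => ?_, fun ⟨k, j, hx, ht⟩ => ht.trans_le (laverage_le_dyadicMaximal hx)⟩
  by_contra! H
  exact ht.not_ge (dyadicMaximal_le H)

theorem measurable_dyadicMaximal [Countable ι] (hD : ∀ k j, MeasurableSet (D k j)) :
    Measurable (dyadicMaximal μ D h) :=
  Measurable.iSup fun k => Measurable.iSup fun j => measurable_const.indicator (hD k j)

theorem dyadicMaximal_mono (hh : ∀ y, h₁ y ≤ h₂ y) :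
    dyadicMaximal μ D h₁ x ≤ dyadicMaximal μ D h₂ x :=
  dyadicMaximal_le fun _ _ hx =>
    (setLAverage_mono_ae _ (Filter.Eventually.of_forall hh)).trans (laverage_le_dyadicMaximal hx)

theorem dyadicMaximal_add_le (hh₁ : Measurable h₁) :
    dyadicMaximal μ D (fun y => h₁ y + h₂ y) x ≤ dyadicMaximal μ D h₁ x + dyadicMaximal μ D h₂ x :=
  dyadicMaximal_le fun _ _ hx => by
    rw [setLAverage_eq, lintegral_add_left hh₁, ENNReal.add_div, ← setLAverage_eq,
      ← setLAverage_eq]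
    exact add_le_add (laverage_le_dyadicMaximal hx) (laverage_le_dyadicMaximal hx)

theorem dyadicMaximal_const_le (c : ℝ≥0∞) : dyadicMaximal μ D (fun _ => c) x ≤ c :=
  dyadicMaximal_le fun k j _ => by
    rw [setLAverage_eq, setLIntegral_const]
    exact ENNReal.div_le_of_le_mul le_rfl

theorem dyadicMaximal_le_indicator_add (hh : Measurable h) (t : ℝ≥0∞) :
    dyadicMaximal μ D h x ≤ dyadicMaximal μ D ({y | t < h y}.indicator h) x + t := by
  have hsplit : ∀ y, h y ≤ {y | t < h y}.indicator h y + t := fun y => by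
    by_cases hy : t < h y
    · rw [indicator_of_mem (show y ∈ {y | t < h y} from hy)]
      exact le_self_add
    · rw [indicator_of_notMem (show y ∉ {y | t < h y} from hy), zero_add]
      exact not_lt.1 hy
  calc dyadicMaximal μ D h x ≤ dyadicMaximal μ D (fun y => {y | t < h y}.indicator h y + t) x :=
        dyadicMaximal_mono hsplit
    _ ≤ _ := (dyadicMaximal_add_le (hh.indicator (measurableSet_lt measurable_const hh))).trans
        (add_le_add le_rfl (dyadicMaximal_const_le t))

theorem IsNested.measure_lt_dyadicMaximal_le [Countable ι] (hD : IsNested D)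
    (hDm : ∀ k j, MeasurableSet (D k j)) (t : ℝ≥0∞) :
    μ {x | t < dyadicMaximal μ D h x} ≤ t⁻¹ * ∫⁻ x, h x ∂μ := by
  obtain ⟨T, hTS, hTd, hcover⟩ :=
    hD.exists_pairwiseDisjoint_cover {p | t < ⨍⁻ y in D p.1 p.2, h y ∂μ}
  have hlevel : {x | t < dyadicMaximal μ D h x} ⊆ ⋃ p ∈ T, D p.1 p.2 := fun x hx => by
    obtain ⟨k, j, hxD, ht⟩ := lt_dyadicMaximal_iff.1 hx
    exact hcover (mem_biUnion (x := (k, j)) ht hxD)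
  calc μ {x | t < dyadicMaximal μ D h x} ≤ μ (⋃ p ∈ T, D p.1 p.2) := measure_mono hlevel
    _ ≤ ∑' p : T, μ (D p.1.1 p.1.2) := measure_biUnion_le μ T.to_countable _
    _ ≤ ∑' p : T, t⁻¹ * ∫⁻ y in D p.1.1 p.1.2, h y ∂μ := ENNReal.tsum_le_tsum fun p =>
        have hp : t < ⨍⁻ y in D p.1.1 p.1.2, h y ∂μ := hTS p.2
        ENNReal.le_inv_mul_of_lt_div (by rwa [setLAverage_eq] at hp)
    _ = t⁻¹ * ∫⁻ y in ⋃ p ∈ T, D p.1 p.2, h y ∂μ := by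
        rw [ENNReal.tsum_mul_left, lintegral_biUnion T.to_countable (fun p _ => hDm _ _) hTd]
    _ ≤ t⁻¹ * ∫⁻ y, h y ∂μ := mul_le_mul_right (setLIntegral_le_lintegral _ _) _

theorem IsNested.measure_two_mul_lt_dyadicMaximal_le [Countable ι] (hD : IsNested D)
    (hDm : ∀ k j, MeasurableSet (D k j)) (hh : Measurable h) (t : ℝ≥0∞) :
    μ {x | 2 * t < dyadicMaximal μ D h x} ≤ t⁻¹ * ∫⁻ y, {y | t < h y}.indicator h y ∂μ := by
  refine (measure_mono fun x (hx : 2 * t < dyadicMaximal μ D h x) => ?_).trans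
    (hD.measure_lt_dyadicMaximal_le hDm _)
  show t < dyadicMaximal μ D ({y | t < h y}.indicator h) x
  by_contra! hle
  have hFx : dyadicMaximal μ D h x ≤ t + t :=
    (dyadicMaximal_le_indicator_add hh _).trans (add_le_add hle le_rfl)
  rw [← two_mul] at hFx
  exact hx.not_ge hFx

theorem IsNested.lintegral_dyadicMaximal_sq_le [Countable ι] (hD : IsNested D)
    (hDm : ∀ k j, MeasurableSet (D k j)) (hh : Measurable h) :
    ∫⁻ x, dyadicMaximal μ D h x ^ 2 ∂μ ≤ 32 * ∫⁻ x, h x ^ 2 ∂μ := by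
  -- Marcinkiewicz interpolation: the level set `{2 ^ (n + 1) < M h}` is controlled by the weak
  -- type bound applied to the part `H n` of `h` above `2 ^ n`.
  set H : ℤ → α → ℝ≥0∞ := fun n => {y | (2 : ℝ≥0∞) ^ n < h y}.indicator h
  have hHm : ∀ n, Measurable (H n) := fun n => hh.indicator (measurableSet_lt measurable_const hh)
  have hpow : ∀ n : ℤ, 16 * ((2 : ℝ≥0∞) ^ n) ^ 2 * ((2 : ℝ≥0∞) ^ n)⁻¹ = 16 * 2 ^ n := fun n => by
    rw [sq, mul_assoc, mul_assoc, ENNReal.mul_inv_cancel (ENNReal.zpow_pos two_ne_zero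
      ENNReal.ofNat_ne_top n).ne' (ENNReal.zpow_lt_top two_ne_zero ENNReal.ofNat_ne_top n).ne,
      mul_one]
  have hpointwise : ∀ y, ∑' n : ℤ, (2 : ℝ≥0∞) ^ n * H n y
      = h y * ∑' n : ℤ, (if (2 : ℝ≥0∞) ^ n < h y then (2 : ℝ≥0∞) ^ n else 0) := fun y => by
    rw [← ENNReal.tsum_mul_left]
    refine tsum_congr fun n => ?_
    simp only [H, indicator_apply, mem_ofPred_eq]
    split_ifs <;> ring
  calc ∫⁻ x, dyadicMaximal μ D h x ^ 2 ∂μ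
      ≤ ∑' n : ℤ, 16 * ((2 : ℝ≥0∞) ^ n) ^ 2 * μ {x | 2 * 2 ^ n < dyadicMaximal μ D h x} :=
        lintegral_sq_le_tsum_measure_lt (measurable_dyadicMaximal hDm)
    _ ≤ ∑' n : ℤ, 16 * ((2 : ℝ≥0∞) ^ n) ^ 2 * (((2 : ℝ≥0∞) ^ n)⁻¹ * ∫⁻ y, H n y ∂μ) :=
        ENNReal.tsum_le_tsum fun n => by
          gcongr
          exact hD.measure_two_mul_lt_dyadicMaximal_le hDm hh _
    _ = 16 * ∫⁻ y, ∑' n : ℤ, (2 : ℝ≥0∞) ^ n * H n y ∂μ := by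
        rw [lintegral_tsum fun n => ((hHm n).const_mul _).aemeasurable, ← ENNReal.tsum_mul_left]
        refine tsum_congr fun n => ?_
        rw [← mul_assoc, hpow, mul_assoc, lintegral_const_mul _ (hHm n)]
    _ ≤ 16 * ∫⁻ y, h y * (2 * h y) ∂μ := by
        gcongr with y
        rw [hpointwise]
        gcongr
        exact tsum_ite_two_zpow_lt_le _
    _ = 32 * ∫⁻ y, h y ^ 2 ∂μ := by
        simp_rw [show ∀ y, h y * (2 * h y) = 2 * h y ^ 2 from fun y => by ring]
        rw [lintegral_const_mul _ (hh.pow_const 2), ← mul_assoc]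
        norm_num

end NestedMaximal

section Cubes

variable {N : ℕ}

theorem cube_eq_pi (c : Euc N) (l : ℝ) : cube c l = univ.pi fun i => Ico (c i) (c i + l) := by
  ext x
  simp [cube, mem_pi]

theorem measurableSet_cube (c : Euc N) (l : ℝ) : MeasurableSet (cube c l) := by
  rw [cube_eq_pi]
  exact MeasurableSet.univ_pi fun _ => measurableSet_Ico

theorem volume_cube (c : Euc N) (l : ℝ) : volume (cube c l) = ENNReal.ofReal l ^ N := by
  rw [cube_eq_pi, volume_pi_pi]
  simp [Real.volume_Ico]

theorem volume_cube_ne_zero (c : Euc N) {l : ℝ} (hl : 0 < l) : volume (cube c l) ≠ 0 := by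
  rw [volume_cube]
  exact pow_ne_zero _ (ENNReal.ofReal_pos.2 hl).ne'

theorem volume_cube_ne_top (c : Euc N) (l : ℝ) : volume (cube c l) ≠ ∞ := by
  rw [volume_cube]
  exact ENNReal.pow_ne_top ENNReal.ofReal_ne_top

theorem volume_cube_le_mul (c c' : Euc N) {l s : ℝ} (n : ℕ) (h : l ≤ n * s) :
    volume (cube c l) ≤ n ^ N * volume (cube c' s) := by
  rw [volume_cube, volume_cube, ← mul_pow]
  gcongr
  calc ENNReal.ofReal l ≤ ENNReal.ofReal (n * s) := ENNReal.ofReal_le_ofReal h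
    _ = n * ENNReal.ofReal s := by
        rw [ENNReal.ofReal_mul (Nat.cast_nonneg _), ENNReal.ofReal_natCast]

theorem integrableOn_cube {f : Euc N → ℝ} (hf : LocallyIntegrable f) (c : Euc N) (l : ℝ) :
    IntegrableOn f (cube c l) :=
  (hf.integrableOn_isCompact (isCompact_Icc (a := c) (b := fun i => c i + l))).mono_set
    fun _ hx => ⟨fun i => (hx i).1, fun i => (hx i).2.le⟩

theorem exists_cube_subset_of_le (c c' : Euc N) {l s : ℝ} (hsl : s ≤ l) :
    ∃ a, cube c l ∩ cube c' s ⊆ cube a s ∧ cube a s ⊆ cube c l := by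
  refine ⟨fun i => max (c i) (min (c' i) (c i + l - s)), fun x ⟨hxQ, hxR⟩ i => ?_,
    fun x hx i => ?_⟩
  · have hmin : x i - s < min (c' i) (c i + l - s) :=
      lt_min (by linarith [(hxR i).2]) (by linarith [(hxQ i).2])
    exact ⟨max_le (hxQ i).1 ((min_le_left _ _).trans (hxR i).1),
      by linarith [le_max_right (c i) (min (c' i) (c i + l - s))]⟩
  · have hmax : max (c i) (min (c' i) (c i + l - s)) ≤ c i + l - s :=
      max_le (by linarith) (min_le_right _ _)
    exact ⟨(le_max_left _ _).trans (hx i).1, by linarith [(hx i).2]⟩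

end Cubes

section Grids

variable {N : ℕ}

def gridCube (o : Euc N) (D : ℝ) (j : Fin N → ℤ) : Set (Euc N) :=
  cube (fun i => o i + j i * D) D

theorem mem_gridCube_iff {o x : Euc N} {D : ℝ} (hD : 0 < D) {j : Fin N → ℤ} :
    x ∈ gridCube o D j ↔ ∀ i, ⌊(x i - o i) / D⌋ = j i := by
  refine forall_congr' fun i => ?_
  rw [Int.floor_eq_iff, le_div_iff₀ hD, div_lt_iff₀ hD]
  constructor <;> rintro ⟨h1, h2⟩ <;> constructor <;> linarith

theorem disjoint_gridCube (o : Euc N) {D : ℝ} (hD : 0 < D) {j j' : Fin N → ℤ} (h : j ≠ j') :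
    Disjoint (gridCube o D j) (gridCube o D j') :=
  disjoint_left.2 fun _ hx hx' => h <| funext fun i =>
    ((mem_gridCube_iff hD).1 hx i).symm.trans ((mem_gridCube_iff hD).1 hx' i)

theorem gridCube_subset_of_nonempty (o : Euc N) {D : ℝ} (hD : 0 < D) {n : ℕ} (hn : 0 < n)
    {j j' : Fin N → ℤ} (h : (gridCube o D j ∩ gridCube o (n * D) j').Nonempty) :
    gridCube o D j ⊆ gridCube o (n * D) j' := by
  have hparent : ∀ y ∈ gridCube o D j, ∀ i, ⌊(y i - o i) / (n * D)⌋ = j i / n := fun y hy i => by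
    rw [div_mul_eq_div_div_swap, Int.floor_div_natCast, (mem_gridCube_iff hD).1 hy i]
  obtain ⟨y, hy, hy'⟩ := h
  intro z hz
  rw [mem_gridCube_iff (by positivity)] at hy' ⊢
  intro i
  rw [hparent z hz i, ← hparent y hy i, hy' i]

def shiftedDyadicCube (c : Euc N) (l : ℝ) (α : Fin N → Bool) (k : ℕ) :
    (Fin N → ℤ) → Set (Euc N) :=
  gridCube (fun i => c i + if α i then l / 3 else 0) (l / 2 ^ k)

theorem isNested_shiftedDyadicCube (c : Euc N) {l : ℝ} (hl : 0 < l) (α : Fin N → Bool) :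
    IsNested (shiftedDyadicCube c l α) where
  disjoint _ _ _ h := disjoint_gridCube _ (by positivity) h
  subset_of_le k k' j j' hk h := by
    have hside : l / 2 ^ k' = ((2 ^ (k - k') : ℕ) : ℝ) * (l / 2 ^ k) := by
      have hpow : (2 : ℝ) ^ k = 2 ^ (k - k') * 2 ^ k' := by rw [← pow_add, Nat.sub_add_cancel hk]
      rw [Nat.cast_pow, Nat.cast_ofNat, hpow]
      field_simp
    unfold shiftedDyadicCube at h ⊢
    rw [hside] at h ⊢
    exact gridCube_subset_of_nonempty _ (by positivity) (by positivity) h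

theorem Ico_subset_Ico_or_mem_Ioo (b t s : ℝ) {D : ℝ} (hD : 0 < D) :
    (∃ m : ℤ, Ico t (t + s) ⊆ Ico (b + m * D) (b + m * D + D)) ∨
      ∃ m : ℤ, b + m * D ∈ Ioo t (t + s) := by
  set m := ⌊(t - b) / D⌋
  have h1 : (m : ℝ) * D ≤ t - b := (le_div_iff₀ hD).1 (Int.floor_le _)
  have h2 : t - b < (m + 1) * D := (div_lt_iff₀ hD).1 (Int.lt_floor_add_one _)
  by_cases hts : t + s ≤ b + m * D + D
  · exact Or.inl ⟨m, Ico_subset_Ico (by linarith) hts⟩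
  · exact Or.inr ⟨m + 1, by push_cast; constructor <;> linarith⟩

/-- The one-third trick. -/
theorem exists_shifted_Ico_superset (b t : ℝ) {l s : ℝ} (k : ℕ) (hl : 0 < l)
    (hs : 3 * s ≤ l / 2 ^ k) :
    ∃ (θ : Bool) (m : ℤ), Ico t (t + s) ⊆
      Ico (b + (if θ then l / 3 else 0) + m * (l / 2 ^ k))
        (b + (if θ then l / 3 else 0) + m * (l / 2 ^ k) + l / 2 ^ k) := by
  set D := l / 2 ^ k
  have hD : 0 < D := by positivity
  rcases Ico_subset_Ico_or_mem_Ioo b t s hD with ⟨m, hm⟩ | ⟨m, hm⟩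
  · exact ⟨false, m, by simpa using hm⟩
  rcases Ico_subset_Ico_or_mem_Ioo (b + l / 3) t s hD with ⟨m', hm'⟩ | ⟨m', hm'⟩
  · exact ⟨true, m', by simpa using hm'⟩
  exfalso
  -- Points of the two grids are at least `D / 3` apart, since `3` does not divide `2 ^ k`.
  have hq : 3 * (m - m') - 2 ^ k ≠ (0 : ℤ) := fun h0 => by
    have h3 : (3 : ℤ) ∣ 2 ^ k := ⟨m - m', by linarith⟩
    have := Int.Prime.dvd_pow' (by norm_num : Nat.Prime 3) h3
    norm_num at this
  have hgap : D / 3 ≤ |(b + m * D) - (b + l / 3 + m' * D)| := by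
    have hl' : l = 2 ^ k * D := by simp only [D]; field_simp
    rw [show (b + m * D) - (b + l / 3 + m' * D) = D / 3 * ((3 * (m - m') - 2 ^ k : ℤ) : ℝ) by
      push_cast; rw [hl']; ring, abs_mul, abs_of_pos (by positivity)]
    exact le_mul_of_one_le_right (by positivity) (by exact_mod_cast Int.one_le_abs hq)
  have hclose : |(b + m * D) - (b + l / 3 + m' * D)| < s :=
    abs_sub_lt_iff.2 ⟨by linarith [hm.2, hm'.1], by linarith [hm.1, hm'.2]⟩
  linarith

theorem exists_shiftedDyadicCube_superset (c a : Euc N) {l s : ℝ} (hl : 0 < l) (hs : 0 < s)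
    (h3 : 3 * s ≤ l) :
    ∃ α k j, cube a s ⊆ shiftedDyadicCube c l α k j ∧ l / 2 ^ k ≤ 6 * s := by
  obtain ⟨k, hk1, hk2⟩ := exists_nat_pow_near (x := l / (3 * s)) (y := (2 : ℝ))
    ((one_le_div (by positivity)).2 h3) one_lt_two
  rw [le_div_iff₀ (by positivity)] at hk1
  rw [div_lt_iff₀ (by positivity), pow_succ] at hk2
  have hk1' : 3 * s ≤ l / 2 ^ k := by rw [le_div_iff₀ (by positivity)]; linarith
  have hk2' : l / 2 ^ k ≤ 6 * s := by rw [div_le_iff₀ (by positivity)]; linarith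
  choose θ m hm using fun i => exists_shifted_Ico_superset (c i) (a i) k hl hk1'
  exact ⟨θ, k, m, fun x hx i => hm i (hx i), hk2'⟩

end Grids

section Weights

theorem lintegral_mul_indicator_withDensity_inv {X : Type*} [MeasurableSpace X]
    {μ : Measure X} {w : X → ℝ} (hwm : Measurable w) (hpos : ∀ x, 0 < w x) {Q : Set X}
    (hQ : MeasurableSet Q) (f : X → ℝ≥0∞) :
    ∫⁻ x, f x * Q.indicator (fun y => ENNReal.ofReal (w y)) x
        ∂μ.withDensity (fun y => ENNReal.ofReal (w y)⁻¹) = ∫⁻ x in Q, f x ∂μ := by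
  have hρ : Measurable fun y => ENNReal.ofReal (w y)⁻¹ := hwm.inv.ennreal_ofReal
  rw [lintegral_withDensity_eq_lintegral_mul_non_measurable _ hρ
    (ae_of_all _ fun _ => ENNReal.ofReal_lt_top),
    ← lintegral_indicator hQ]
  refine lintegral_congr fun x => ?_
  by_cases hx : x ∈ Q
  · simp only [Pi.mul_apply, indicator_of_mem hx]
    rw [mul_left_comm, ← ENNReal.ofReal_mul (inv_pos.2 (hpos x)).le,
      inv_mul_cancel₀ (hpos x).ne', ENNReal.ofReal_one, mul_one]
  · simp [indicator_of_notMem hx]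

variable {X : Type*} [MeasureSpace X]

def weightMeasure (w : X → ℝ) : Measure X :=
  volume.withDensity fun x => ENNReal.ofReal (w x)

theorem weightMeasure_apply (w : X → ℝ) {s : Set X} (hs : MeasurableSet s) :
    weightMeasure w s = ∫⁻ x in s, ENNReal.ofReal (w x) :=
  withDensity_apply _ hs

theorem weightMeasure_eq_ofReal_integral {w : X → ℝ} (hw0 : ∀ x, 0 ≤ w x)
    {s : Set X} (hs : MeasurableSet s) (hw : IntegrableOn w s) :
    weightMeasure w s = ENNReal.ofReal (∫ x in s, w x) := by
  rw [weightMeasure_apply w hs, ofReal_integral_eq_lintegral_ofReal hw (ae_of_all _ hw0)]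

theorem weightMeasure_ne_zero {w : X → ℝ} (hwm : Measurable w) (hpos : ∀ x, 0 < w x)
    {s : Set X} (hs : volume s ≠ 0) : weightMeasure w s ≠ 0 := by
  rw [weightMeasure, Ne, withDensity_apply_eq_zero' hwm.ennreal_ofReal.aemeasurable]
  simpa [(hpos _).not_ge] using hs

theorem volume_sq_le_weightMeasure_mul {w : X → ℝ} (hwm : Measurable w)
    (hpos : ∀ x, 0 < w x) {s : Set X} (hs : MeasurableSet s) :
    volume s ^ 2 ≤ weightMeasure w s * weightMeasure (fun x => (w x)⁻¹) s := by
  have hsqrt : ∀ v : X → ℝ, (∀ x, 0 < v x) →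
      ∀ x, ENNReal.ofReal √(v x) ^ 2 = ENNReal.ofReal (v x) := fun v hv x => by
    rw [← ENNReal.ofReal_pow (Real.sqrt_nonneg _), Real.sq_sqrt (hv x).le]
  have hone : ∀ x, ENNReal.ofReal √(w x) * ENNReal.ofReal √(w x)⁻¹ = 1 := fun x => by
    rw [← ENNReal.ofReal_mul (Real.sqrt_nonneg _), ← Real.sqrt_mul (hpos x).le,
      mul_inv_cancel₀ (hpos x).ne', Real.sqrt_one, ENNReal.ofReal_one]
  have hCS := lintegral_mul_sq_le (μ := volume.restrict s)
    (f := fun x => ENNReal.ofReal √(w x)) (g := fun x => ENNReal.ofReal √(w x)⁻¹)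
    (Real.continuous_sqrt.measurable.comp hwm).ennreal_ofReal.aemeasurable
    (Real.continuous_sqrt.measurable.comp hwm.inv).ennreal_ofReal.aemeasurable
  simp only [hone, hsqrt w hpos, hsqrt (fun x => (w x)⁻¹) fun x => inv_pos.2 (hpos x),
    setLIntegral_one] at hCS
  rwa [weightMeasure_apply _ hs, weightMeasure_apply _ hs]

theorem setLIntegral_indicator_weightMeasure_inv {w : X → ℝ} (hwm : Measurable w)
    (hpos : ∀ x, 0 < w x) {P Q : Set X} (hP : MeasurableSet P) (hQ : MeasurableSet Q) :
    ∫⁻ x in P, Q.indicator (fun y => ENNReal.ofReal (w y)) x ∂weightMeasure (fun x => (w x)⁻¹) =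
      volume (Q ∩ P) := by
  have h := lintegral_mul_indicator_withDensity_inv (μ := volume.restrict P) hwm hpos hQ 1
  simp only [Pi.one_apply, one_mul, setLIntegral_one] at h
  rw [weightMeasure, restrict_withDensity hP, h, Measure.restrict_apply hQ]

end Weights

section Estimate

variable {N : ℕ}

def weightedDyadicMaximal (w : Euc N → ℝ) (c : Euc N) (l : ℝ) (α : Fin N → Bool) :
    Euc N → ℝ≥0∞ :=
  dyadicMaximal (weightMeasure fun x => (w x)⁻¹) (shiftedDyadicCube c l α)
    ((cube c l).indicator fun y => ENNReal.ofReal (w y))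

theorem measurable_weightedDyadicMaximal (w : Euc N → ℝ) (c : Euc N) (l : ℝ)
    (α : Fin N → Bool) : Measurable (weightedDyadicMaximal w c l α) :=
  measurable_dyadicMaximal fun _ _ => measurableSet_cube _ _

theorem measure_inter_div_le_of_le (ν : Measure (Euc N)) (c c' : Euc N) {l s : ℝ} (hl : 0 < l)
    (hs : 0 < s) (hls : l ≤ 3 * s) :
    ν (cube c l ∩ cube c' s) / volume (cube c' s) ≤ 3 ^ N * (ν (cube c l) / volume (cube c l)) := by
  have hvol : volume (cube c l) ≤ 3 ^ N * volume (cube c' s) := by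
    simpa using volume_cube_le_mul c c' 3 (by simpa using hls)
  rw [← mul_div_assoc]
  refine ENNReal.div_le_div_of_mul_le_mul ?_ (volume_cube_ne_zero c' hs) (volume_cube_ne_top c' s)
    (volume_cube_ne_zero c hl) (volume_cube_ne_top c l)
  calc ν (cube c l ∩ cube c' s) * volume (cube c l)
      ≤ ν (cube c l) * (3 ^ N * volume (cube c' s)) := by
        gcongr
        exact inter_subset_left
    _ = 3 ^ N * ν (cube c l) * volume (cube c' s) := by ring

namespace IsA2Weight

variable {w : Euc N → ℝ}

theorem weightMeasure_mul_le (hw : IsA2Weight w) (a : Euc N) {s : ℝ} (hs : 0 < s) :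
    weightMeasure w (cube a s) * weightMeasure (fun x => (w x)⁻¹) (cube a s) ≤
      ENNReal.ofReal (A2const w) * volume (cube a s) ^ 2 := by
  set K := cube a s
  have hK0 := volume_cube_ne_zero a hs
  have hKt := volume_cube_ne_top a s
  have havg : ∀ v : Euc N → ℝ, LocallyIntegrable v → (∀ x, 0 < v x) →
      ENNReal.ofReal (⨍ x in K, v x) = weightMeasure v K / volume K := fun v hv hpos => by
    rw [ofReal_setAverage (integrableOn_cube hv a s) (ae_of_all _ fun x => (hpos x).le),
      weightMeasure_apply v (measurableSet_cube a s)]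
  have havg_nonneg : 0 ≤ ⨍ x in K, w x := by
    rw [setAverage_eq]
    exact smul_nonneg (by positivity) (setIntegral_nonneg (measurableSet_cube a s)
      fun x _ => (hw.pos x).le)
  have hA : ENNReal.ofReal ((⨍ x in K, w x) * ⨍ x in K, (w x)⁻¹) ≤ ENNReal.ofReal (A2const w) :=
    ENNReal.ofReal_le_ofReal (le_csSup hw.bddA2 ⟨a, s, hs, rfl⟩)
  rw [ENNReal.ofReal_mul havg_nonneg, havg w hw.locInt hw.pos,
    havg _ hw.locIntInv fun x => inv_pos.2 (hw.pos x)] at hA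
  calc weightMeasure w K * weightMeasure (fun x => (w x)⁻¹) K
      = (weightMeasure w K / volume K) * (weightMeasure (fun x => (w x)⁻¹) K / volume K) *
          volume K ^ 2 := by
        rw [sq, mul_mul_mul_comm, ENNReal.div_mul_cancel hK0 hKt, ENNReal.div_mul_cancel hK0 hKt]
    _ ≤ ENNReal.ofReal (A2const w) * volume K ^ 2 := by gcongr

theorem one_le_A2const (hw : IsA2Weight w) : 1 ≤ A2const w := by
  have hK0 := volume_cube_ne_zero (0 : Euc N) one_pos
  have hKt := volume_cube_ne_top (0 : Euc N) 1
  have h : 1 * volume (cube (0 : Euc N) 1) ^ 2 ≤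
      ENNReal.ofReal (A2const w) * volume (cube (0 : Euc N) 1) ^ 2 := by
    rw [one_mul]
    exact (volume_sq_le_weightMeasure_mul hw.meas hw.pos (measurableSet_cube 0 1)).trans
      (hw.weightMeasure_mul_le 0 one_pos)
  exact ENNReal.one_le_ofReal.1
    ((ENNReal.mul_le_mul_iff_left (pow_ne_zero 2 hK0) (ENNReal.pow_ne_top hKt)).1 h)

theorem weightMeasure_div_le_mul_setLAverage (hw : IsA2Weight w) {a : Euc N} {r : ℝ} (hr : 0 < r)
    {Q R S : Set (Euc N)} (hQ : MeasurableSet Q) {C : ℝ≥0∞} (hS : S ⊆ cube a r)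
    (hPR : volume (cube a r) ≤ C * volume R) (hRP : volume R ≤ volume (Q ∩ cube a r))
    (hR0 : volume R ≠ 0) (hRt : volume R ≠ ∞) :
    weightMeasure w S / volume R ≤ C ^ 2 * ENNReal.ofReal (A2const w) *
      ⨍⁻ y in cube a r, Q.indicator (fun y => ENNReal.ofReal (w y)) y
        ∂weightMeasure fun x => (w x)⁻¹ := by
  set P := cube a r
  set σ := weightMeasure fun x => (w x)⁻¹
  set A := ENNReal.ofReal (A2const w)
  have hσpos : ∀ x, 0 < (w x)⁻¹ := fun x => inv_pos.2 (hw.pos x)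
  have hPm : MeasurableSet P := measurableSet_cube a r
  have hσ0 : σ P ≠ 0 := weightMeasure_ne_zero hw.meas.inv hσpos (volume_cube_ne_zero a hr)
  have hσt : σ P ≠ ∞ := by
    rw [weightMeasure_eq_ofReal_integral (fun x => (hσpos x).le) hPm
      (integrableOn_cube hw.locIntInv a r)]
    exact ENNReal.ofReal_ne_top
  have hcross : weightMeasure w S * σ P ≤ C ^ 2 * A * volume (Q ∩ P) * volume R :=
    calc weightMeasure w S * σ P ≤ weightMeasure w P * σ P := by gcongr
      _ ≤ A * volume P ^ 2 := hw.weightMeasure_mul_le a hr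
      _ ≤ A * ((C * volume (Q ∩ P)) * (C * volume R)) := by
          rw [sq]
          gcongr
          exact hPR.trans (by gcongr)
      _ = C ^ 2 * A * volume (Q ∩ P) * volume R := by ring
  calc weightMeasure w S / volume R ≤ C ^ 2 * A * volume (Q ∩ P) / σ P :=
        ENNReal.div_le_div_of_mul_le_mul hcross hR0 hRt hσ0 hσt
    _ = C ^ 2 * A * ⨍⁻ y in P, Q.indicator (fun y => ENNReal.ofReal (w y)) y ∂σ := by
        rw [setLAverage_eq, mul_div_assoc,
          setLIntegral_indicator_weightMeasure_inv hw.meas hw.pos hPm hQ]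

theorem exists_weightMeasure_inter_div_le (hw : IsA2Weight w) {c c' x : Euc N} {l s : ℝ}
    (hl : 0 < l) (hx : x ∈ cube c l) (hs : 0 < s) (hxR : x ∈ cube c' s) (h3 : 3 * s ≤ l) :
    ∃ α, weightMeasure w (cube c l ∩ cube c' s) / volume (cube c' s) ≤
      36 ^ N * ENNReal.ofReal (A2const w) * weightedDyadicMaximal w c l α x := by
  obtain ⟨a, hQRK, hKQ⟩ := exists_cube_subset_of_le c c' (by linarith : s ≤ l)
  obtain ⟨α, k, j, hKP, hPs⟩ := exists_shiftedDyadicCube_superset c a hl hs h3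
  have hPR : volume (shiftedDyadicCube c l α k j) ≤ ((6 : ℕ) : ℝ≥0∞) ^ N * volume (cube c' s) :=
    volume_cube_le_mul _ c' 6 (by exact_mod_cast hPs)
  rw [Nat.cast_ofNat] at hPR
  have hRP : volume (cube c' s) ≤ volume (cube c l ∩ shiftedDyadicCube c l α k j) := by
    rw [show volume (cube c' s) = volume (cube a s) by rw [volume_cube, volume_cube]]
    exact measure_mono (subset_inter hKQ hKP)
  refine ⟨α, ?_⟩
  calc weightMeasure w (cube c l ∩ cube c' s) / volume (cube c' s)
      ≤ (6 ^ N) ^ 2 * ENNReal.ofReal (A2const w) *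
          ⨍⁻ y in shiftedDyadicCube c l α k j,
            (cube c l).indicator (fun y => ENNReal.ofReal (w y)) y ∂weightMeasure fun x => (w x)⁻¹ :=
        hw.weightMeasure_div_le_mul_setLAverage (by positivity) (measurableSet_cube c l)
          (fun y hy => hKP (hQRK hy)) hPR hRP (volume_cube_ne_zero c' hs)
          (volume_cube_ne_top c' s)
    _ ≤ 36 ^ N * ENNReal.ofReal (A2const w) * weightedDyadicMaximal w c l α x := by
        rw [show ((6 : ℝ≥0∞) ^ N) ^ 2 = 36 ^ N by rw [← pow_mul, mul_comm, pow_mul]; norm_num]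
        exact mul_le_mul_right (laverage_le_dyadicMaximal (hKP (hQRK ⟨hx, hxR⟩))) _

theorem ofReal_setAverage_abs_indicator (hw : IsA2Weight w) {Q : Set (Euc N)}
    (hQ : MeasurableSet Q) (c' : Euc N) (s : ℝ) :
    ENNReal.ofReal (⨍ y in cube c' s, |Q.indicator w y|) =
      weightMeasure w (Q ∩ cube c' s) / volume (cube c' s) := by
  have hnonneg : ∀ y, 0 ≤ Q.indicator w y := indicator_nonneg fun x _ => (hw.pos x).le
  simp_rw [abs_of_nonneg (hnonneg _)]
  rw [ofReal_setAverage ((integrableOn_cube hw.locInt c' s).indicator hQ) (ae_of_all _ hnonneg),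
    weightMeasure_apply _ (hQ.inter (measurableSet_cube c' s)), ← setLIntegral_indicator hQ]
  congr 1
  refine lintegral_congr fun y => ?_
  by_cases hy : y ∈ Q <;> simp [hy]

theorem maximalFn_indicator_le (hw : IsA2Weight w) {c x : Euc N} {l : ℝ} (hl : 0 < l)
    (hx : x ∈ cube c l) :
    maximalFn ((cube c l).indicator w) x ≤
      3 ^ N * (weightMeasure w (cube c l) / volume (cube c l)) +
        36 ^ N * ENNReal.ofReal (A2const w) * ∑ α, weightedDyadicMaximal w c l α x := by
  refine iSup_le fun c' => iSup_le fun s => iSup_le fun hs => iSup_le fun hxR => ?_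
  rw [hw.ofReal_setAverage_abs_indicator (measurableSet_cube c l)]
  rcases le_or_gt l (3 * s) with hls | h3
  · exact (measure_inter_div_le_of_le _ c c' hl hs hls).trans le_self_add
  · obtain ⟨α, hα⟩ := hw.exists_weightMeasure_inter_div_le hl hx hs hxR h3.le
    refine hα.trans (le_add_left ?_)
    gcongr
    exact Finset.single_le_sum (f := fun α => weightedDyadicMaximal w c l α x)
      (fun _ _ => zero_le) (Finset.mem_univ α)

theorem lintegral_weightedDyadicMaximal_le (hw : IsA2Weight w) (c : Euc N) {l : ℝ} (hl : 0 < l)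
    (α : Fin N → Bool) :
    ∫⁻ x in cube c l, weightedDyadicMaximal w c l α x ≤ 6 * weightMeasure w (cube c l) := by
  set Q := cube c l
  set g := Q.indicator fun y => ENNReal.ofReal (w y)
  set G := weightedDyadicMaximal w c l α
  set σ := weightMeasure fun x => (w x)⁻¹
  have hQm : MeasurableSet Q := measurableSet_cube c l
  have hgm : Measurable g := hw.meas.ennreal_ofReal.indicator hQm
  have hσ : ∀ f : Euc N → ℝ≥0∞, ∫⁻ x, f x * g x ∂σ = ∫⁻ x in Q, f x :=
    lintegral_mul_indicator_withDensity_inv hw.meas hw.pos hQm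
  have hg2 : ∫⁻ x, g x ^ 2 ∂σ = weightMeasure w Q := by
    simp_rw [sq, hσ]
    rw [setLIntegral_indicator hQm, inter_self, weightMeasure_apply _ hQm]
  -- Cauchy–Schwarz in `L²(σ)`, after writing `dx = g dσ` on `Q`.
  have hCS : (∫⁻ x in Q, G x) ^ 2 ≤ (6 * weightMeasure w Q) ^ 2 :=
    calc (∫⁻ x in Q, G x) ^ 2 = (∫⁻ x, G x * g x ∂σ) ^ 2 := by rw [hσ]
      _ ≤ (∫⁻ x, G x ^ 2 ∂σ) * ∫⁻ x, g x ^ 2 ∂σ :=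
          lintegral_mul_sq_le (measurable_weightedDyadicMaximal w c l α).aemeasurable
            hgm.aemeasurable
      _ ≤ (32 * ∫⁻ x, g x ^ 2 ∂σ) * ∫⁻ x, g x ^ 2 ∂σ := by
          gcongr
          exact (isNested_shiftedDyadicCube c hl α).lintegral_dyadicMaximal_sq_le
            (fun _ _ => measurableSet_cube _ _) hgm
      _ ≤ (6 * weightMeasure w Q) ^ 2 := by
          rw [hg2, mul_pow, sq (weightMeasure w Q), ← mul_assoc]
          gcongr
          norm_num
  exact (ENNReal.pow_le_pow_left_iff two_ne_zero).1 hCS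

theorem lintegral_maximalFn_indicator_le (hw : IsA2Weight w) (c : Euc N) {l : ℝ} (hl : 0 < l) :
    ∫⁻ x in cube c l, maximalFn ((cube c l).indicator w) x ≤
      (3 ^ N + 6 * 72 ^ N) * ENNReal.ofReal (A2const w) * weightMeasure w (cube c l) := by
  set Q := cube c l
  set A := ENNReal.ofReal (A2const w)
  have hM : ∀ α, Measurable (weightedDyadicMaximal w c l α) :=
    measurable_weightedDyadicMaximal w c l
  calc ∫⁻ x in Q, maximalFn (Q.indicator w) x
      ≤ ∫⁻ x in Q, 3 ^ N * (weightMeasure w Q / volume Q) +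
          36 ^ N * A * ∑ α, weightedDyadicMaximal w c l α x :=
        setLIntegral_mono (by fun_prop) fun x hx => hw.maximalFn_indicator_le hl hx
    _ = 3 ^ N * weightMeasure w Q +
          36 ^ N * A * ∑ α, ∫⁻ x in Q, weightedDyadicMaximal w c l α x := by
        rw [lintegral_add_left measurable_const, setLIntegral_const, mul_assoc,
          ENNReal.div_mul_cancel (volume_cube_ne_zero c hl) (volume_cube_ne_top c l),
          lintegral_const_mul _ (Finset.measurable_sum _ fun α _ => hM α),
          lintegral_finsetSum _ fun α _ => hM α]
    _ ≤ 3 ^ N * weightMeasure w Q + 36 ^ N * A * ∑ _α : Fin N → Bool, 6 * weightMeasure w Q := by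
        gcongr with α
        exact hw.lintegral_weightedDyadicMaximal_le c hl α
    _ ≤ (3 ^ N + 6 * 72 ^ N) * A * weightMeasure w Q := by
        rw [Finset.sum_const, Finset.card_univ, Fintype.card_fun, Fintype.card_bool,
          Fintype.card_fin, nsmul_eq_mul, add_mul, add_mul,
          show (72 : ℝ≥0∞) ^ N = 36 ^ N * 2 ^ N by rw [← mul_pow]; norm_num]
        push_cast
        gcongr ?_ + ?_
        · calc 3 ^ N * weightMeasure w Q = 3 ^ N * 1 * weightMeasure w Q := by rw [mul_one]
            _ ≤ 3 ^ N * A * weightMeasure w Q := by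
                gcongr
                exact ENNReal.one_le_ofReal.2 hw.one_le_A2const
        · exact le_of_eq (by ring)

end IsA2Weight

end Estimate

/-- `∫_Q M(w·1_Q) dx ≤ C [w]_{A₂} w(Q)` for `A₂` weights `w`. -/
theorem statement_18 (N : ℕ) :
    ∃ C : ℝ, 0 < C ∧
    ∀ w : Euc N → ℝ, IsA2Weight w →
    ∀ (c : Euc N) (l : ℝ), 0 < l →
      ∫⁻ x in cube c l, maximalFn ((cube c l).indicator w) x
        ≤ ENNReal.ofReal (C * A2const w * ∫ x in cube c l, w x) := by
  refine ⟨3 ^ N + 6 * 72 ^ N, by positivity, fun w hw c l hl => ?_⟩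
  have hC : ENNReal.ofReal (3 ^ N + 6 * 72 ^ N) = 3 ^ N + 6 * 72 ^ N := by
    rw [ENNReal.ofReal_add (by positivity) (by positivity), ENNReal.ofReal_mul (by norm_num),
      ENNReal.ofReal_pow (by norm_num), ENNReal.ofReal_pow (by norm_num)]
    norm_num
  rw [ENNReal.ofReal_mul (mul_nonneg (by positivity) (zero_le_one.trans hw.one_le_A2const)),
    ENNReal.ofReal_mul (by positivity), hC, ← weightMeasure_eq_ofReal_integral
      (fun x => (hw.pos x).le) (measurableSet_cube c l) (integrableOn_cube hw.locInt c l)]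
  exact hw.lintegral_maximalFn_indicator_le c hl
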